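/- arXiv:2508.06476 — 3 statements merged into one kernel-verified Lean document; each statement's English description precedes it below -/
import Mathlib

section
/- Let G be a connected graph, w a vertex of G, and G_1, ..., G_s connected subgraphs with G = G_1 ∪ ... ∪ G_s and V(G_i) ∩ V(G_j) = {w} for all i ≠ j. Then f_G(w) = ∏_{i=1}^s f_{G_i}(w). -/
open SimpleGraph

/-- The number of connected subgraphs of `G` (nonempty vertex-and-edge-set pairs
that are connected). -/
noncomputable def numCS {V : Type*} (G : SimpleGraph V) : ℕ :=
  {H : G.Subgraph | H.Connected}.ncard

/-- The number of connected subgraphs of `G` containing the vertex `v`. -/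
noncomputable def numCSv {V : Type*} (G : SimpleGraph V) (v : V) : ℕ :=
  {H : G.Subgraph | H.Connected ∧ v ∈ H.verts}.ncard

/-- The number of connected subgraphs of `G` containing both `v` and `w`. -/
noncomputable def numCSvw {V : Type*} (G : SimpleGraph V) (v w : V) : ℕ :=
  {H : G.Subgraph | H.Connected ∧ v ∈ H.verts ∧ w ∈ H.verts}.ncard

/-- `v` is a cut vertex of `G`: deleting it disconnects the graph. -/
def IsCutVertex {V : Type*} (G : SimpleGraph V) (v : V) : Prop :=
  ¬ (G.induce {u | u ≠ v}).Connected

/-- `G` is 2-connected: connected, at least 3 vertices, and no cut vertex. -/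
def TwoConnected {V : Type*} (G : SimpleGraph V) : Prop :=
  G.Connected ∧ 3 ≤ Nat.card V ∧ ∀ v : V, ¬ IsCutVertex G v

/-- The star `K_{1,n-1}`: vertex `0` is the center, adjacent to all other vertices. -/
def starGraph (n : ℕ) : SimpleGraph (Fin n) :=
  SimpleGraph.fromRel (fun i _ => i.val = 0)

/-- The broom (path-star) `P_{k+1, n-k-1}`: the path `0 - 1 - ⋯ - k` together with the
leaves `k+1, …, n-1` all attached to the vertex `k`. -/
def broom (n k : ℕ) : SimpleGraph (Fin n) :=
  SimpleGraph.fromRel (fun i j => (i.val + 1 = j.val ∧ j.val ≤ k) ∨ (i.val = k ∧ k < j.val))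

/-- The lollipop `L_{n, n-k}`: the cycle `0 - 1 - ⋯ - (n-k-1) - 0` together with the
path `0 - (n-k) - (n-k+1) - ⋯ - (n-1)` attached at the cycle vertex `0`;
its pendant vertex is `n-1`. -/
def lollipop (n k : ℕ) : SimpleGraph (Fin n) :=
  SimpleGraph.fromRel (fun i j =>
    (i.val + 1 = j.val ∧ j.val ≤ n - k - 1) ∨ (i.val = 0 ∧ j.val = n - k - 1) ∨
    (i.val = 0 ∧ j.val = n - k) ∨ (i.val + 1 = j.val ∧ n - k + 1 ≤ j.val))

section Aux

variable {V : Type*} {G : SimpleGraph V}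

/-- Iso between a subgraph-of-subgraph's coe and its coeSubgraph's coe. -/
noncomputable def coeSubgraphIso {G' : G.Subgraph} (L : G'.coe.Subgraph) :
    L.coe ≃g (Subgraph.coeSubgraph L).coe where
  toEquiv := Equiv.Set.image (Subtype.val : G'.verts → V) L.verts Subtype.val_injective
  map_rel_iff' := by
    intro a b
    simp only [Equiv.Set.image_apply, Subgraph.coe_adj, Subgraph.coeSubgraph_adj]
    constructor
    · rintro ⟨hv, hw, h⟩
      convert h using 2 <;> rfl
    · intro h
      refine ⟨(↑a : G'.verts).2, (↑b : G'.verts).2, ?_⟩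
      convert h using 2 <;> exact Subtype.ext rfl

lemma coeSubgraph_connected_iff {G' : G.Subgraph} (L : G'.coe.Subgraph) :
    (Subgraph.coeSubgraph L).Connected ↔ L.Connected := by
  rw [Subgraph.connected_iff', Subgraph.connected_iff']
  exact ((coeSubgraphIso L).connected_iff).symm

lemma reach_of_subgraph_le {A B : G.Subgraph} (h : A ≤ B) {a b : V}
    (ha : a ∈ A.verts) (hb : b ∈ A.verts) (hr : A.coe.Reachable ⟨a, ha⟩ ⟨b, hb⟩) :
    B.coe.Reachable ⟨a, h.1 ha⟩ ⟨b, h.1 hb⟩ :=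
  hr.map (Subgraph.inclusion h)

lemma numCSv_coe_eq (G' : G.Subgraph) (x : V) (hx : x ∈ G'.verts) :
    {L : G'.coe.Subgraph | L.Connected ∧ (⟨x, hx⟩ : G'.verts) ∈ L.verts}.ncard
      = {K : G.Subgraph | K ≤ G' ∧ K.Connected ∧ x ∈ K.verts}.ncard := by
  rw [← Set.ncard_image_of_injective _ (Subgraph.coeSubgraph_injective G')]
  congr 1
  ext K
  simp only [Set.mem_image, Set.mem_setOf_eq]
  constructor
  · rintro ⟨L, ⟨hc, hm⟩, rfl⟩
    exact ⟨Subgraph.coeSubgraph_le L, (coeSubgraph_connected_iff L).2 hc,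
      ⟨⟨x, hx⟩, hm, rfl⟩⟩
  · rintro ⟨hle, hc, hm⟩
    refine ⟨G'.restrict K, ⟨?_, ?_⟩, ?_⟩
    · rw [← coeSubgraph_connected_iff, Subgraph.coeSubgraph_restrict_eq,
        inf_eq_right.2 hle]
      exact hc
    · exact hm
    · rw [Subgraph.coeSubgraph_restrict_eq, inf_eq_right.2 hle]

theorem numCSv_of_iUnion' {V : Type*} (G : SimpleGraph V) (hG : G.Connected)
    (w : V) (s : ℕ) (H : Fin s → G.Subgraph) (hconn : ∀ i, (H i).Connected)
    (hsup : (⨆ i, H i) = ⊤) (hw : ∀ i, w ∈ (H i).verts)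
    (hint : ∀ i j, i ≠ j → (H i).verts ∩ (H j).verts = {w}) :
    {K : G.Subgraph | K.Connected ∧ w ∈ K.verts}.ncard
      = ∏ i, {K : G.Subgraph | K ≤ H i ∧ K.Connected ∧ w ∈ K.verts}.ncard := by
  classical
  rcases Nat.eq_zero_or_pos s with rfl | hs
  · exfalso
    have h0 : (⨆ i : Fin 0, H i) = ⊥ := iSup_of_empty _
    rw [h0] at hsup
    have : w ∈ (⊥ : G.Subgraph).verts := by rw [hsup]; trivial
    exact this
  have i0 : Fin s := ⟨0, hs⟩
  -- every vertex of a connected subgraph containing w lies in H i implies reachability in K ⊓ H i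
  have key : ∀ (K : G.Subgraph), K.Connected → ∀ (hwK : w ∈ K.verts) (i : Fin s),
      (K ⊓ H i).Connected := by
    intro K hK hwK i
    have hreach : ∀ (a b : K.verts), K.coe.Walk a b → (↑b : V) = w →
        ∀ (ha : ↑a ∈ (H i).verts),
        (K ⊓ H i).coe.Reachable ⟨↑a, ⟨a.2, ha⟩⟩ ⟨w, ⟨hwK, hw i⟩⟩ := by
      intro a b p
      induction p with
      | @nil c =>
        intro hb ha
        have huw : (⟨↑c, ⟨c.2, ha⟩⟩ : ((K ⊓ H i).verts)) = ⟨w, ⟨hwK, hw i⟩⟩ :=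
          Subtype.ext hb
        rw [huw]
      | @cons u v _ h q ih =>
        intro hb ha
        by_cases hu : (↑u : V) = w
        · have huw : (⟨↑u, ⟨u.2, ha⟩⟩ : ((K ⊓ H i).verts)) = ⟨w, ⟨hwK, hw i⟩⟩ :=
            Subtype.ext hu
          rw [huw]
        · have hKadj : K.Adj ↑u ↑v := h
          have hG' : (⊤ : G.Subgraph).Adj ↑u ↑v := by
            rw [Subgraph.top_adj]; exact K.adj_sub hKadj
          rw [← hsup, Subgraph.iSup_adj] at hG'
          obtain ⟨j, hj⟩ := hG'
          have hji : j = i := by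
            by_contra hne
            have hmem : (↑u : V) ∈ (H i).verts ∩ (H j).verts :=
              ⟨ha, (H j).edge_vert hj⟩
            rw [hint i j (Ne.symm hne)] at hmem
            exact hu hmem
          subst hji
          have hvH : (↑v : V) ∈ (H j).verts := (H j).edge_vert hj.symm
          have hadj : (K ⊓ H j).Adj ↑u ↑v := ⟨hKadj, hj⟩
          have hcoe : (K ⊓ H j).coe.Adj ⟨↑u, ⟨u.2, ha⟩⟩ ⟨↑v, ⟨v.2, hvH⟩⟩ := hadj
          exact (hcoe.reachable).trans (ih hb hvH)
    rw [Subgraph.connected_iff]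
    refine ⟨Subgraph.preconnected_iff.mpr fun x y => ?_, ⟨w, hwK, hw i⟩⟩
    obtain ⟨px⟩ := hK ⟨↑x, x.2.1⟩ ⟨w, hwK⟩
    obtain ⟨py⟩ := hK ⟨↑y, y.2.1⟩ ⟨w, hwK⟩
    have rx := hreach _ _ px rfl x.2.2
    have ry := hreach _ _ py rfl y.2.2
    have ex : (⟨(↑x : V), ⟨x.2.1, x.2.2⟩⟩ : ((K ⊓ H i).verts)) = x := Subtype.ext rfl
    have ey : (⟨(↑y : V), ⟨y.2.1, y.2.2⟩⟩ : ((K ⊓ H i).verts)) = y := Subtype.ext rfl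
    rw [ex] at rx
    rw [ey] at ry
    exact rx.trans ry.symm
  set S : Set G.Subgraph := {K | K.Connected ∧ w ∈ K.verts} with hS
  set T : Fin s → Set G.Subgraph := fun i => {K | K ≤ H i ∧ K.Connected ∧ w ∈ K.verts} with hT
  have hver : ∀ (c : ∀ i, T i) (i j : Fin s), j ≠ i →
      ∀ x ∈ ((c j : G.Subgraph) ⊓ H i).verts, x = w := by
    intro c i j hne x hx
    have hxj : x ∈ (H j).verts := (c j).2.1.1 hx.1
    have hmem : x ∈ (H j).verts ∩ (H i).verts := ⟨hxj, hx.2⟩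
    rw [hint j i hne] at hmem
    exact hmem
  have hinf : ∀ (c : ∀ i, T i) (i : Fin s), (⨆ j, (c j : G.Subgraph)) ⊓ H i = c i := by
    intro c i
    rw [iSup_inf_eq]
    apply le_antisymm
    · refine iSup_le fun j => ?_
      rcases eq_or_ne j i with rfl | hne
      · exact inf_le_left
      · refine ⟨fun x hx => ?_, fun {a b} hab => ?_⟩
        · rw [hver c i j hne x hx]
          exact (c i).2.2.2
        · exfalso
          have ha := hver c i j hne a (((c j : G.Subgraph) ⊓ H i).edge_vert hab)
          have hb := hver c i j hne b (((c j : G.Subgraph) ⊓ H i).edge_vert hab.symm)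
          subst ha; subst hb
          exact G.loopless.irrefl _ (((c j : G.Subgraph) ⊓ H i).adj_sub hab)
    · exact (le_inf le_rfl (c i).2.1).trans (le_iSup (fun j => (c j : G.Subgraph) ⊓ H i) i)
  have hwsup : ∀ (c : ∀ i, T i), w ∈ (⨆ i, (c i : G.Subgraph)).verts := by
    intro c
    rw [Subgraph.verts_iSup]
    exact Set.mem_iUnion.mpr ⟨i0, (c i0).2.2.2⟩
  have hsupc : ∀ (c : ∀ i, T i), (⨆ i, (c i : G.Subgraph)) ∈ S := by
    intro c
    refine ⟨?_, hwsup c⟩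
    have hrw : ∀ x : ((⨆ i, (c i : G.Subgraph)).verts),
        (⨆ i, (c i : G.Subgraph)).coe.Reachable x ⟨w, hwsup c⟩ := by
      intro x
      have hx : ↑x ∈ ⋃ i, (c i : G.Subgraph).verts := by
        rw [← Subgraph.verts_iSup]; exact x.2
      obtain ⟨j, hj⟩ := Set.mem_iUnion.mp hx
      have hle : (c j : G.Subgraph) ≤ ⨆ i, (c i : G.Subgraph) := le_iSup (fun i => (c i : G.Subgraph)) j
      have hre := reach_of_subgraph_le hle hj (c j).2.2.2
        ((c j).2.2.1 ⟨↑x, hj⟩ ⟨w, (c j).2.2.2⟩)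
      have ex : (⟨(↑x : V), hle.1 hj⟩ : ((⨆ i, (c i : G.Subgraph)).verts)) = x :=
        Subtype.ext rfl
      have ew : (⟨w, hle.1 (c j).2.2.2⟩ : ((⨆ i, (c i : G.Subgraph)).verts))
          = ⟨w, hwsup c⟩ := Subtype.ext rfl
      rw [ex, ew] at hre
      exact hre
    rw [Subgraph.connected_iff]
    exact ⟨Subgraph.preconnected_iff.mpr
      fun x y => (hrw x).trans (hrw y).symm, ⟨w, hwsup c⟩⟩
  have e : S ≃ (∀ i, T i) :=
    { toFun := fun K i => ⟨(K : G.Subgraph) ⊓ H i,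
        inf_le_right, key K K.2.1 K.2.2 i, ⟨K.2.2, hw i⟩⟩
      invFun := fun c => ⟨⨆ i, (c i : G.Subgraph), hsupc c⟩
      left_inv := fun K => Subtype.ext (by
        simp only
        rw [← inf_iSup_eq, hsup, inf_top_eq])
      right_inv := fun c => funext fun i => Subtype.ext (hinf c i) }
  rw [← Nat.card_coe_set_eq, Nat.card_congr e, Nat.card_pi]
  exact Finset.prod_congr rfl fun i _ => Nat.card_coe_set_eq _

end Aux

theorem numCSv_of_iUnion {V : Type*} (G : SimpleGraph V) (hG : G.Connected)
    (w : V) (s : ℕ) (H : Fin s → G.Subgraph) (hconn : ∀ i, (H i).Connected)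
    (hsup : (⨆ i, H i) = ⊤) (hw : ∀ i, w ∈ (H i).verts)
    (hint : ∀ i j, i ≠ j → (H i).verts ∩ (H j).verts = {w}) :
    numCSv G w = ∏ i, numCSv (H i).coe ⟨w, hw i⟩ := by
  rw [numCSv, numCSv_of_iUnion' G hG w s H hconn hsup hw hint]
  exact Finset.prod_congr rfl fun i _ => by
    rw [numCSv, numCSv_coe_eq (H i) w (hw i)]
end

section
/- Let u and v be two vertices of the cycle C_n at distance d (1 ≤ d ≤ n/2). Then the number of connected subgraphs of C_n containing both u and v equals (n^2 + 2d^2 - 2nd + n + 2)/2. Consequently, (n^2 + 2n + 4)/4 ≤ f_{C_n}(u, v) ≤ (n^2 - n + 4)/2, with the upper bound attained exactly when d = 1 and the lower bound exactly when d = n/2. -/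
open SimpleGraph

open scoped Fin.NatCast Fin.CommRing

namespace CycAux
variable {n : ℕ}

lemma val_sub_eq [NeZero n] (a b : Fin n) :
    (a - b).val = if b.val ≤ a.val then a.val - b.val else a.val + n - b.val := by
  have ha := a.isLt; have hb := b.isLt
  rw [Fin.sub_def]
  show (n - b.val + a.val) % n = _
  rcases le_or_gt b.val a.val with h | h
  · rw [if_pos h]
    have h1 : n - b.val + a.val = (a.val - b.val) + n := by omega
    rw [h1, Nat.add_mod_right]
    have h2 : a.val - b.val < n := by omega
    exact Nat.mod_eq_of_lt h2
  · rw [if_neg (by omega)]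
    have h2 : n - b.val + a.val = a.val + n - b.val := by omega
    rw [h2]
    have h3 : a.val + n - b.val < n := by omega
    exact Nat.mod_eq_of_lt h3

lemma val_add_eq [NeZero n] (a b : Fin n) :
    (a + b).val = if a.val + b.val < n then a.val + b.val else a.val + b.val - n := by
  have ha := a.isLt; have hb := b.isLt
  rw [Fin.add_def]
  show (a.val + b.val) % n = _
  rcases lt_or_ge (a.val + b.val) n with h | h
  · rw [if_pos h]; exact Nat.mod_eq_of_lt h
  · rw [if_neg (by omega)]
    have h1 : a.val + b.val = (a.val + b.val - n) + n := by omega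
    rw [h1, Nat.add_mod_right]
    have h2 : a.val + b.val - n < n := by omega
    rw [Nat.mod_eq_of_lt h2]
    omega

lemma val_one_eq [NeZero n] (hn : 3 ≤ n) : (1 : Fin n).val = 1 := by
  rw [Fin.val_one']
  exact Nat.mod_eq_of_lt (by omega)

lemma eq_of_sub_val_eq [NeZero n] {x y b : Fin n} (h : (x - b).val = (y - b).val) : x = y := by
  have h2 : x - b = y - b := Fin.ext h
  have h3 := congrArg (· + b) h2
  simpa using h3

lemma val_cast_eq [NeZero n] (k : ℕ) (hk : k < n) : ((k : Fin n)).val = k := by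
  rw [Fin.val_natCast]
  exact Nat.mod_eq_of_lt hk

end CycAux

namespace CycAux
variable {n : ℕ}

lemma val_add_one' [NeZero n] (hn : 3 ≤ n) (t : Fin n) (h : t + 1 ≠ 0) :
    (t + 1).val = t.val + 1 := by
  have ht := t.isLt
  rcases lt_or_ge (t.val + 1) n with hlt | hge
  · rw [val_add_eq, val_one_eq hn, if_pos (by omega)]
  · exfalso; apply h; apply Fin.ext
    rw [val_add_eq, val_one_eq hn, if_neg (by omega)]
    simp only [Fin.val_zero]
    omega

lemma sub_val_zero_iff [NeZero n] (x a : Fin n) : (x - a).val = 0 ↔ x = a := by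
  constructor
  · intro h
    apply eq_of_sub_val_eq (b := a)
    rw [h, sub_self]
    simp
  · rintro rfl; rw [sub_self]; simp

lemma val_sub_add_one [NeZero n] (hn : 3 ≤ n) (c a : Fin n) (h : c ≠ a) :
    (c - a).val = (c - (a + 1)).val + 1 := by
  have h1 : c - a = (c - (a + 1)) + 1 := by ring
  rw [h1]
  exact val_add_one' hn _ (by rw [← h1]; exact sub_ne_zero_of_ne h)

lemma val_add_one_sub [NeZero n] (hn : 3 ≤ n) (c a : Fin n) (h : c + 1 ≠ a) :
    ((c + 1) - a).val = (c - a).val + 1 := by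
  have h1 : (c + 1) - a = (c - a) + 1 := by ring
  rw [h1]
  exact val_add_one' hn _ (by rw [← h1]; exact sub_ne_zero_of_ne h)

/-- The arc subgraph of the cycle: vertices at cyclic positions `0, …, k-1` after `b`,
with all consecutive edges. -/
def arcSub [NeZero n] (b : Fin n) (k : ℕ) : (cycleGraph n).Subgraph where
  verts := {x | (x - b).val < k}
  Adj x y := ((x - b).val + 1 = (y - b).val ∨ (y - b).val + 1 = (x - b).val)
    ∧ (x - b).val < k ∧ (y - b).val < k
  adj_sub := by
    rintro x y ⟨h1 | h1, h2, h3⟩ <;> rw [cycleGraph_adj']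
    · right
      have h4 : (y - b) - (x - b) = y - x := by ring
      rw [← h4, val_sub_eq, if_pos (by omega)]
      omega
    · left
      have h4 : (x - b) - (y - b) = x - y := by ring
      rw [← h4, val_sub_eq, if_pos (by omega)]
      omega
  edge_vert := by rintro x y ⟨_, h2, _⟩; exact h2
  symm := ⟨by rintro x y ⟨h1, h2, h3⟩; exact ⟨h1.symm, h3, h2⟩⟩

lemma arcSub_verts [NeZero n] (b : Fin n) (k : ℕ) :
    (arcSub b k).verts = {x | (x - b).val < k} := rfl

lemma arcSub_adj [NeZero n] (b : Fin n) (k : ℕ) (x y : Fin n) :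
    (arcSub b k).Adj x y ↔ ((x - b).val + 1 = (y - b).val ∨ (y - b).val + 1 = (x - b).val)
    ∧ (x - b).val < k ∧ (y - b).val < k := Iff.rfl

lemma arcSub_connected [NeZero n] (hn : 3 ≤ n) (b : Fin n) {k : ℕ} (hk1 : 1 ≤ k) :
    (arcSub b k).Connected := by
  have hbv : b ∈ (arcSub b k).verts := by
    show (b - b).val < k
    rw [sub_self]; simp; omega
  rw [Subgraph.connected_iff]
  constructor
  · constructor
    have key : ∀ (j : ℕ) (x : Fin n) (hx : x ∈ (arcSub b k).verts), (x - b).val = j →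
        (arcSub b k).coe.Reachable ⟨x, hx⟩ ⟨b, hbv⟩ := by
      intro j
      induction j with
      | zero =>
        intro x hx h0
        have hxb : x = b := (sub_val_zero_iff x b).mp h0
        have : (⟨x, hx⟩ : (arcSub b k).verts) = ⟨b, hbv⟩ := Subtype.ext hxb
        rw [this]
      | succ j ih =>
        intro x hx hj
        have hxb : x ≠ b := by
          intro hxb; rw [hxb, sub_self] at hj; simp at hj
        have hpos : (x - (b + 1)).val = j := by
          have := val_sub_add_one hn x b hxb
          omega
        set x' := b + 1 + (x - (b + 1)) - 1 with hx'def
        -- simpler: x' = x - 1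
        clear hx'def
        have hx'pos : ((x - 1) - b).val = j := by
          have h1 : (x - 1) - b = x - (b + 1) := by ring
          rw [h1]; exact hpos
        have hx'mem : (x - 1) ∈ (arcSub b k).verts := by
          show ((x - 1) - b).val < k
          have hxmem : (x - b).val < k := hx
          omega
        have hadj : (arcSub b k).Adj (x - 1) x := by
          refine ⟨Or.inl ?_, hx'mem, hx⟩
          rw [hx'pos, hj]
        have hstep : (arcSub b k).coe.Adj ⟨x, hx⟩ ⟨x - 1, hx'mem⟩ := hadj.symm
        exact hstep.reachable.trans (ih (x - 1) hx'mem hx'pos)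
    intro x y
    exact (key _ x.1 x.2 rfl).trans (key _ y.1 y.2 rfl).symm
  · exact ⟨b, hbv⟩

end CycAux

namespace CycAux
variable {n : ℕ}

lemma eq_add_one_of_val [NeZero n] (hn : 3 ≤ n) {x y c : Fin n}
    (h : (x - c).val + 1 = (y - c).val) : y = x + 1 := by
  have h0 : (x - c) + 1 ≠ 0 := by
    intro h0
    have h1 : x - c = -1 := eq_neg_of_add_eq_zero_left h0
    have h2 : (x - c).val = n - 1 := by
      rw [h1, (by ring : (-1 : Fin n) = 0 - 1), val_sub_eq, val_one_eq hn]
      rw [Fin.val_zero]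
      rw [if_neg (by omega)]
      omega
    have h3 := (y - c).isLt
    omega
  have h2 : ((x - c) + 1).val = (y - c).val := by rw [val_add_one' hn _ h0]; exact h
  have h3 : (x + 1 - c).val = (y - c).val := by
    rw [(by ring : x + 1 - c = (x - c) + 1)]; exact h2
  exact (eq_of_sub_val_eq h3).symm

lemma adj_cases [NeZero n] (hn : 3 ≤ n) {x y : Fin n} (h : (cycleGraph n).Adj x y) :
    y = x + 1 ∨ x = y + 1 := by
  rw [cycleGraph_adj'] at h
  rcases h with h | h
  · right
    refine eq_add_one_of_val hn (c := y) ?_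
    rw [sub_self]
    simpa using h.symm
  · left
    refine eq_add_one_of_val hn (c := x) ?_
    rw [sub_self]
    simpa using h.symm

/-- Key walk lemma: any walk in a subgraph of the cycle certifies that all edges of one
of the two arcs between its endpoints are present. -/
lemma walk_edges [NeZero n] (hn : 3 ≤ n) (H : (cycleGraph n).Subgraph) :
    ∀ (x y : H.verts) (_ : H.coe.Walk x y),
      (∀ i : Fin n, (i - x.1).val < (y.1 - x.1).val → H.Adj i (i + 1)) ∨
      (∀ i : Fin n, (i - y.1).val < (x.1 - y.1).val → H.Adj i (i + 1)) := by
  intro x y p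
  induction p with
  | nil =>
    left; intro i hi; rw [sub_self] at hi; simp at hi
  | @cons a b c h p ih =>
    have hH : H.Adj a.1 b.1 := h
    by_cases hCA : c.1 = a.1
    · left; intro i hi; rw [hCA, sub_self] at hi; simp at hi
    rcases adj_cases hn hH.adj_sub with hBA | hAB
    · -- b = a + 1 (step up)
      have hedgeA : H.Adj a.1 (a.1 + 1) := by rw [← hBA]; exact hH
      have h1A : ((a.1 + 1) - a.1).val = 1 := by
        rw [(by ring : a.1 + 1 - a.1 = 1), val_one_eq hn]
      by_cases hCB : c.1 = b.1
      · left; intro i hi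
        rw [hCB, hBA] at hi
        rw [h1A] at hi
        have : i = a.1 := (sub_val_zero_iff _ _).mp (by omega)
        rw [this]; exact hedgeA
      rcases ih with ihl | ihr
      · left; intro i hi
        by_cases hiA : i = a.1
        · rw [hiA]; exact hedgeA
        · apply ihl
          have h1 : (i - a.1).val = (i - b.1).val + 1 := by
            rw [val_sub_add_one hn i a.1 hiA, hBA]
          have h2 : (c.1 - a.1).val = (c.1 - b.1).val + 1 := by
            rw [val_sub_add_one hn c.1 a.1 hCA, hBA]
          omega
      · right; intro i hi
        apply ihr
        have h2 : (b.1 - c.1).val = (a.1 - c.1).val + 1 := by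
          rw [hBA]
          exact val_add_one_sub hn a.1 c.1 (by rw [← hBA]; exact fun hh => hCB hh.symm)
        omega
    · -- a = b + 1 (step down)
      have hedgeB : H.Adj b.1 (b.1 + 1) := by rw [← hAB]; exact hH.symm
      by_cases hCB : c.1 = b.1
      · right; intro i hi
        have h1 : (a.1 - c.1).val = 1 := by
          rw [hAB, hCB, (by ring : b.1 + 1 - b.1 = 1), val_one_eq hn]
        rw [h1] at hi
        have : i = c.1 := (sub_val_zero_iff _ _).mp (by omega)
        rw [this, hCB]; exact hedgeB
      rcases ih with ihl | ihr
      · left; intro i hi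
        by_cases hiB : i = b.1
        · rw [hiB]; exact hedgeB
        · apply ihl
          have h1 : (i - b.1).val = (i - a.1).val + 1 := by
            rw [val_sub_add_one hn i b.1 hiB, ← hAB]
          have h2 : (c.1 - b.1).val = (c.1 - a.1).val + 1 := by
            rw [val_sub_add_one hn c.1 b.1 hCB, ← hAB]
          omega
      · right; intro i hi
        have h2 : (a.1 - c.1).val = (b.1 - c.1).val + 1 := by
          rw [hAB]
          exact val_add_one_sub hn b.1 c.1 (by rw [← hAB]; exact fun hh => hCA hh.symm)
        by_cases hiB : i = b.1
        · rw [hiB]; exact hedgeB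
        · apply ihr
          have h3 : (i - c.1).val ≠ (b.1 - c.1).val := by
            intro hh; exact hiB (eq_of_sub_val_eq hh)
          omega

end CycAux

namespace CycAux
variable {n : ℕ}

lemma val_sub_le [NeZero n] (a c : Fin n) (h : c.val ≤ a.val) : (a - c).val = a.val - c.val := by
  rw [val_sub_eq, if_pos h]

lemma val_sub_gt [NeZero n] (a c : Fin n) (h : a.val < c.val) : (a - c).val = a.val + n - c.val := by
  rw [val_sub_eq, if_neg (by omega)]

lemma conn_classify [NeZero n] (hn : 3 ≤ n) (H : (cycleGraph n).Subgraph) (hc : H.Connected) :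
    H = ⊤ ∨ ∃ b k, 1 ≤ k ∧ k ≤ n ∧ H = arcSub b k := by
  by_cases hall : ∀ i : Fin n, H.Adj i (i + 1)
  · left
    have hverts : H.verts = Set.univ := by
      ext x
      simp only [Set.mem_univ, iff_true]
      exact (hall x).fst_mem
    apply Subgraph.ext
    · rw [hverts, Subgraph.verts_top]
    · funext x y
      apply propext
      rw [Subgraph.top_adj]
      constructor
      · exact fun h => h.adj_sub
      · intro h
        rcases adj_cases hn h with h1 | h1
        · rw [h1]; exact hall x
        · rw [h1]; exact (hall y).symm
  · right
    push_neg at hall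
    obtain ⟨m, hm⟩ := hall
    set b := m + 1 with hb
    have hmb : (m - b).val = n - 1 := by
      rw [(by rw [hb]; ring : m - b = 0 - 1), val_sub_eq, val_one_eq hn]
      rw [Fin.val_zero]
      rw [if_neg (by omega)]
      omega
    -- directed edge-filling property
    have main : ∀ x y : Fin n, x ∈ H.verts → y ∈ H.verts →
        (x - b).val ≤ (y - b).val →
        ∀ i : Fin n, (x - b).val ≤ (i - b).val → (i - b).val < (y - b).val →
        H.Adj i (i + 1) := by
      intro x y hx hy hxy i hi1 hi2
      obtain ⟨p⟩ := hc.coe ⟨x, hx⟩ ⟨y, hy⟩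
      have hxval := (x - b).isLt
      have hyval := (y - b).isLt
      have hival := (i - b).isLt
      rcases walk_edges hn H ⟨x, hx⟩ ⟨y, hy⟩ p with hl | hr
      · have hl' : ∀ j : Fin n, (j - x).val < (y - x).val → H.Adj j (j + 1) := hl
        apply hl'
        have e1 : (i - x).val = (i - b).val - (x - b).val := by
          rw [(by ring : i - x = (i - b) - (x - b))]
          exact val_sub_le _ _ hi1
        have e2 : (y - x).val = (y - b).val - (x - b).val := by
          rw [(by ring : y - x = (y - b) - (x - b))]
          exact val_sub_le _ _ hxy
        omega
      · -- show positions must coincide, making the claim vacuous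
        exfalso
        by_cases hyx : (y - b).val ≤ (x - b).val
        · omega
        · apply hm
          have hr' : ∀ j : Fin n, (j - y).val < (x - y).val → H.Adj j (j + 1) := hr
          apply hr'
          have e1 : (m - y).val = (n - 1) - (y - b).val := by
            rw [(by ring : m - y = (m - b) - (y - b))]
            rw [val_sub_le _ _ (by omega), hmb]
          have e2 : (x - y).val = (x - b).val + n - (y - b).val := by
            rw [(by ring : x - y = (x - b) - (y - b))]
            exact val_sub_gt _ _ (by omega)
          omega
    obtain ⟨x₀, hx₀, hlo⟩ := Set.exists_min_image H.verts (fun x => (x - b).val)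
      (Set.toFinite _) hc.nonempty
    obtain ⟨x₁, hx₁, hhi⟩ := Set.exists_max_image H.verts (fun x => (x - b).val)
      (Set.toFinite _) hc.nonempty
    set lo := (x₀ - b).val with hlodef
    set hi := (x₁ - b).val with hhidef
    have hlohi : lo ≤ hi := hlo x₁ hx₁
    have hhin := (x₁ - b).isLt
    refine ⟨x₀, hi - lo + 1, by omega, by omega, ?_⟩
    -- position relative to x₀
    have hq : ∀ x : Fin n, lo ≤ (x - b).val → (x - x₀).val = (x - b).val - lo := by
      intro x hx
      rw [(by ring : x - x₀ = (x - b) - (x₀ - b))]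
      exact val_sub_le _ _ hx
    -- membership characterization
    have hmem : ∀ x : Fin n, x ∈ H.verts ↔ (x - x₀).val < hi - lo + 1 := by
      intro x
      constructor
      · intro hx
        rw [hq x (hlo x hx)]
        have := hhi x hx
        omega
      · intro hx
        have hxval := (x - b).isLt
        have hxlo : lo ≤ (x - b).val := by
          by_contra hc'
          push_neg at hc'
          have : (x - x₀).val = (x - b).val + n - lo := by
            rw [(by ring : x - x₀ = (x - b) - (x₀ - b))]
            exact val_sub_gt _ _ (by omega)
          omega
        have hxhi : (x - b).val ≤ hi := by
          rw [hq x hxlo] at hx; omega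
        rcases Nat.eq_or_lt_of_le hxlo with heq | hlt
        · have : x = x₀ := eq_of_sub_val_eq (b := b) (by omega)
          rw [this]; exact hx₀
        · -- x has position ≥ lo + 1 : use the edge below it
          have hxb : x ≠ b := by
            intro hxb
            rw [hxb, sub_self] at hlt hxhi
            simp at hlt
          have hprev : ((x - 1) - b).val = (x - b).val - 1 := by
            have := val_sub_add_one hn x b hxb
            have hrw : x - (b + 1) = (x - 1) - b := by ring
            rw [hrw] at this
            omega
          have hedge : H.Adj (x - 1) ((x - 1) + 1) :=
            main x₀ x₁ hx₀ hx₁ hlohi (x - 1) (by omega) (by omega)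
          have : H.Adj (x - 1) x := by
            rwa [(by ring : (x - 1) + 1 = x)] at hedge
          exact this.symm.fst_mem
    apply Subgraph.ext
    · ext x
      rw [arcSub_verts]
      exact hmem x
    · funext x y
      apply propext
      rw [arcSub_adj]
      constructor
      · intro hxy
        have hx := hxy.fst_mem
        have hy := hxy.snd_mem
        have hxlo := hlo x hx
        have hylo := hlo y hy
        have hxhi := hhi x hx
        have hyhi := hhi y hy
        refine ⟨?_, (hmem x).mp hx, (hmem y).mp hy⟩
        rcases adj_cases hn hxy.adj_sub with h1 | h1
        · -- y = x + 1
          left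
          have hxm : x ≠ m := by
            intro hh
            apply hm
            have hby : b = y := by rw [hb, ← hh, ← h1]
            rw [hby, ← hh]
            exact hxy
          have hstep : (y - b).val = (x - b).val + 1 := by
            rw [h1]
            apply val_add_one_sub hn x b
            intro hh
            apply hxm
            have : x = b - 1 := by rw [← hh]; ring
            rw [this, hb]; ring
          rw [hq x hxlo, hq y hylo]
          omega
        · -- x = y + 1
          right
          have hym : y ≠ m := by
            intro hh
            apply hm
            have hby : b = x := by rw [hb, ← hh, ← h1]
            rw [hby, ← hh]
            exact hxy.symm
          have hstep : (x - b).val = (y - b).val + 1 := by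
            rw [h1]
            apply val_add_one_sub hn y b
            intro hh
            apply hym
            have : y = b - 1 := by rw [← hh]; ring
            rw [this, hb]; ring
          rw [hq x hxlo, hq y hylo]
          omega
      · rintro ⟨h1, hx, hy⟩
        have hxv : x ∈ H.verts := (hmem x).mpr hx
        have hyv : y ∈ H.verts := (hmem y).mpr hy
        have hxlo := hlo x hxv
        have hylo := hlo y hyv
        have hxhi := hhi x hxv
        have hyhi := hhi y hyv
        rcases h1 with h1 | h1
        · -- y = x + 1, edge at x
          have hyx : y = x + 1 := eq_add_one_of_val hn h1
          have hedge : H.Adj x (x + 1) := by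
            apply main x₀ x₁ hx₀ hx₁ hlohi x (by omega)
            have := hq x hxlo
            have := hq y hylo
            omega
          rwa [← hyx] at hedge
        · have hxy : x = y + 1 := eq_add_one_of_val hn h1
          have hedge : H.Adj y (y + 1) := by
            apply main x₀ x₁ hx₀ hx₁ hlohi y (by omega)
            have := hq x hxlo
            have := hq y hylo
            omega
          rw [← hxy] at hedge
          exact hedge.symm

end CycAux

namespace CycAux
variable {n : ℕ}

instance subgraphFinite {V : Type*} [Finite V] (G : SimpleGraph V) : Finite G.Subgraph :=
  Finite.of_injective (fun H => (H.verts, H.Adj))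
    (fun H K h => by
      obtain ⟨h1, h2⟩ := Prod.mk.injEq _ _ _ _ ▸ h
      exact Subgraph.ext h1 h2)

lemma top_connected [NeZero n] (hn : 3 ≤ n) : (⊤ : (cycleGraph n).Subgraph).Connected := by
  rw [Subgraph.connected_iff']
  rw [(Subgraph.topIso (G := cycleGraph n)).connected_iff]
  obtain ⟨m, rfl⟩ : ∃ m, n = m + 1 := ⟨n - 1, by omega⟩
  exact cycleGraph_connected

lemma neg_one_val [NeZero n] (hn : 3 ≤ n) (b : Fin n) : ((b - 1) - b).val = n - 1 := by
  rw [(by ring : (b - 1) - b = 0 - 1), val_sub_eq, val_one_eq hn]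
  rw [Fin.val_zero]
  rw [if_neg (by omega)]
  omega

lemma arcSub_ne_top [NeZero n] (hn : 3 ≤ n) (b : Fin n) {k : ℕ} (hk : k ≤ n) :
    arcSub b k ≠ ⊤ := by
  intro h
  rcases Nat.lt_or_ge k n with hlt | hge
  · have : (b - 1) ∈ (arcSub b k).verts := by rw [h]; trivial
    rw [arcSub_verts] at this
    rw [Set.mem_setOf_eq, neg_one_val hn b] at this
    omega
  · have hkn : k = n := by omega
    have hadj : (⊤ : (cycleGraph n).Subgraph).Adj (b - 1) b := by
      rw [Subgraph.top_adj, cycleGraph_adj']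
      right
      rw [(by ring : b - (b - 1) = 1), val_one_eq hn]
    rw [← h, arcSub_adj] at hadj
    obtain ⟨h1, -, -⟩ := hadj
    rw [neg_one_val hn b, sub_self] at h1
    simp only [Fin.val_zero] at h1
    omega

lemma arcSub_inj [NeZero n] (hn : 3 ≤ n) {b b' : Fin n} {k k' : ℕ}
    (hk1 : 1 ≤ k) (hk2 : k ≤ n) (hk1' : 1 ≤ k') (hk2' : k' ≤ n)
    (h : arcSub b k = arcSub b' k') : b = b' ∧ k = k' := by
  have hv : ∀ x : Fin n, (x - b).val < k ↔ (x - b').val < k' := by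
    intro x
    constructor
    · intro hx
      have : x ∈ (arcSub b' k').verts := by rw [← h]; exact hx
      exact this
    · intro hx
      have : x ∈ (arcSub b k).verts := by rw [h]; exact hx
      exact this
  have hbb : b = b' := by
    by_contra hbb
    rcases Nat.lt_or_ge k n with hlt | hge
    · -- k < n : b ∈ verts, b - 1 ∉ verts forces b = b'
      have hb2 : (b - b').val < k' := by
        rw [← hv b, sub_self]
        simp; omega
      have hb3 : ¬ ((b - 1) - b').val < k' := by
        rw [← hv (b - 1), neg_one_val hn b]
        omega
      have hstep : (b - b').val = ((b - 1) - b').val + 1 := by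
        rw [(by ring : b - b' = ((b - 1) + 1) - b')]
        exact val_add_one_sub hn (b - 1) b' (by rw [(by ring : b - 1 + 1 = b)]; exact hbb)
      have := ((b - 1) - b').isLt
      omega
    · -- k = n; then k' = n too (verts = univ), distinguish by adjacency
      have hkn : k = n := by omega
      have hk'n : k' = n := by
        by_contra hk'n
        have h1 : ((b' - 1) - b).val < k := by rw [hkn]; exact ((b' - 1) - b).isLt
        have h2 := (hv (b' - 1)).mp h1
        rw [neg_one_val hn b'] at h2
        omega
      -- Adj (b-1) b holds in arcSub b' n but not arcSub b n
      have hadj : (arcSub b' k').Adj (b - 1) b := by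
        rw [arcSub_adj]
        have hstep : (b - b').val = ((b - 1) - b').val + 1 := by
          rw [(by ring : b - b' = ((b - 1) + 1) - b')]
          exact val_add_one_sub hn (b - 1) b' (by rw [(by ring : b - 1 + 1 = b)]; exact hbb)
        refine ⟨Or.inl hstep.symm, ?_, ?_⟩
        · rw [hk'n]; exact ((b - 1) - b').isLt
        · rw [hk'n]; exact (b - b').isLt
      rw [← h, arcSub_adj] at hadj
      obtain ⟨h1, -, -⟩ := hadj
      rw [neg_one_val hn b, sub_self] at h1
      simp only [Fin.val_zero] at h1
      omega
  subst hbb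
  constructor
  · rfl
  · -- now k = k'
    by_contra hkk
    rcases Nat.lt_or_ge k k' with hlt | hge
    · have hx : ((b + (k : Fin n)) - b).val = k := by
        rw [(by ring : b + (k : Fin n) - b = (k : Fin n))]
        exact val_cast_eq k (by omega)
      have := (hv (b + (k : Fin n))).mpr (by rw [hx]; omega)
      omega
    · have hlt' : k' < k := by omega
      have hx : ((b + (k' : Fin n)) - b).val = k' := by
        rw [(by ring : b + (k' : Fin n) - b = (k' : Fin n))]
        exact val_cast_eq k' (by omega)
      have := (hv (b + (k' : Fin n))).mp (by rw [hx]; omega)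
      omega

end CycAux

namespace CycAux
variable {n : ℕ}

lemma exists_walk_up [NeZero n] (hn : 3 ≤ n) :
    ∀ (t : ℕ) (a : Fin n), ∃ p : (cycleGraph n).Walk a (a + (t : Fin n)), p.length = t := by
  intro t
  induction t with
  | zero => intro a; exact ⟨Walk.nil.copy rfl (by simp), by simp⟩
  | succ t ih =>
    intro a
    obtain ⟨p, hp⟩ := ih (a + 1)
    have hadj : (cycleGraph n).Adj a (a + 1) := by
      rw [cycleGraph_adj']
      right
      rw [(by ring : a + 1 - a = 1), val_one_eq hn]
    have hcast : a + 1 + (t : Fin n) = a + ((t + 1 : ℕ) : Fin n) := by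
      push_cast
      ring
    exact ⟨(Walk.cons hadj p).copy rfl hcast, by simp [hp]⟩

lemma walk_net [NeZero n] (hn : 3 ≤ n) :
    ∀ (a c : Fin n) (p : (cycleGraph n).Walk a c),
      ∃ s t : ℕ, s + t = p.length ∧ c - a = (s : Fin n) - (t : Fin n) := by
  intro a c p
  induction p with
  | nil => exact ⟨0, 0, by simp, by simp⟩
  | @cons a b c h p ih =>
    obtain ⟨s, t, hst, hrel⟩ := ih
    rcases adj_cases hn h with h1 | h1
    · -- b = a + 1
      refine ⟨s + 1, t, by simp [Walk.length_cons]; omega, ?_⟩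
      have : c - a = (c - b) + 1 := by rw [h1]; ring
      rw [this, hrel]
      push_cast
      ring
    · -- a = b + 1
      refine ⟨s, t + 1, by simp [Walk.length_cons]; omega, ?_⟩
      have : c - a = (c - b) - 1 := by rw [h1]; ring
      rw [this, hrel]
      push_cast
      ring

lemma cycle_dist [NeZero n] (hn : 3 ≤ n) (u v : Fin n) (huv : u ≠ v) :
    (cycleGraph n).dist u v = min (v - u).val (n - (v - u).val) := by
  have hconn : (cycleGraph n).Connected := by
    obtain ⟨m, rfl⟩ : ∃ m, n = m + 1 := ⟨n - 1, by omega⟩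
    exact cycleGraph_connected
  set e := (v - u).val with he
  have hesz := (v - u).isLt
  have hepos : 1 ≤ e := by
    rcases Nat.eq_zero_or_pos e with h0 | h1
    · exfalso; exact huv (eq_of_sub_val_eq (b := u) (by rw [sub_self]; rw [he] at h0; simpa using h0)).symm
    · exact h1
  -- upper bounds
  have hub1 : (cycleGraph n).dist u v ≤ e := by
    obtain ⟨p, hp⟩ := exists_walk_up hn e u
    have hcast : u + ((e : ℕ) : Fin n) = v := by
      rw [he, Fin.cast_val_eq_self]
      ring
    calc (cycleGraph n).dist u v ≤ (p.copy rfl hcast).length := SimpleGraph.dist_le _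
    _ = e := by simpa using hp
  have hub2 : (cycleGraph n).dist u v ≤ n - e := by
    have hvu : (u - v).val = n - e := by
      rw [(by ring : u - v = 0 - (v - u)), val_sub_eq]
      rw [Fin.val_zero]
      rw [if_neg (by omega)]
      omega
    obtain ⟨p, hp⟩ := exists_walk_up hn (n - e) v
    have hcast : v + (((n - e) : ℕ) : Fin n) = u := by
      rw [← hvu, Fin.cast_val_eq_self]
      ring
    rw [SimpleGraph.dist_comm]
    calc (cycleGraph n).dist v u ≤ (p.copy rfl hcast).length := SimpleGraph.dist_le _
    _ = n - e := by simpa using hp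
  -- lower bound
  obtain ⟨p, hp⟩ := hconn.exists_walk_length_eq_dist u v
  obtain ⟨s, t, hst, hrel⟩ := walk_net hn u v p
  rw [hp] at hst
  set D := (cycleGraph n).dist u v with hD
  have hlb : min e (n - e) ≤ D := by
    by_contra hcon
    push_neg at hcon
    have hsn : s < n := by omega
    have htn : t < n := by omega
    have hval : e = ((s : Fin n) - (t : Fin n)).val := by rw [← hrel]
    rw [val_sub_eq, val_cast_eq s hsn, val_cast_eq t htn] at hval
    rcases le_or_gt t s with hts | hts
    · rw [if_pos hts] at hval
      omega
    · rw [if_neg (by omega)] at hval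
      omega
  omega

end CycAux

namespace CycAux
variable {n : ℕ}

lemma gauss (m : ℕ) : 2 * (∑ j ∈ Finset.range m, (m - j)) = m * (m + 1) := by
  induction m with
  | zero => simp
  | succ m ih =>
    rw [Finset.sum_range_succ]
    have h1 : ∑ j ∈ Finset.range m, (m + 1 - j) = (∑ j ∈ Finset.range m, (m - j)) + m := by
      have hc : ∀ j ∈ Finset.range m, m + 1 - j = (m - j) + 1 := by
        intro j hj
        rw [Finset.mem_range] at hj
        omega
      rw [Finset.sum_congr rfl hc, Finset.sum_add_distrib]
      simp
    rw [h1, (by omega : m + 1 - m = 1)]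
    nlinarith [ih]

lemma sum_max (hn : 3 ≤ n) (e : ℕ) (he : e < n) :
    2 * (∑ j ∈ Finset.range n, (n - max j ((e + j) % n))) =
      (n - e) * (n - e + 1) + e * (e + 1) := by
  have hsplit : ∑ j ∈ Finset.range n, (n - max j ((e + j) % n)) =
      (∑ j ∈ Finset.Ico 0 (n - e), (n - max j ((e + j) % n))) +
      (∑ j ∈ Finset.Ico (n - e) n, (n - max j ((e + j) % n))) := by
    rw [Finset.range_eq_Ico, ← Finset.sum_Ico_consecutive _ (by omega : 0 ≤ n - e) (by omega : n - e ≤ n)]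
  have h1 : ∑ j ∈ Finset.Ico 0 (n - e), (n - max j ((e + j) % n)) =
      ∑ j ∈ Finset.range (n - e), ((n - e) - j) := by
    rw [← Finset.range_eq_Ico]
    apply Finset.sum_congr rfl
    intro j hj
    rw [Finset.mem_range] at hj
    have hmod : (e + j) % n = e + j := Nat.mod_eq_of_lt (by omega)
    rw [hmod]
    have : max j (e + j) = e + j := by omega
    rw [this]
    omega
  have h2 : ∑ j ∈ Finset.Ico (n - e) n, (n - max j ((e + j) % n)) =
      ∑ j ∈ Finset.range e, (e - j) := by
    rw [Finset.sum_Ico_eq_sum_range]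
    have hne : n - (n - e) = e := by omega
    rw [hne]
    apply Finset.sum_congr rfl
    intro j hj
    rw [Finset.mem_range] at hj
    have harg : e + (n - e + j) = n + j := by omega
    rw [harg]
    have hmod : (n + j) % n = j := by
      rw [Nat.add_mod_left]
      exact Nat.mod_eq_of_lt (by omega)
    rw [hmod]
    have : max (n - e + j) j = n - e + j := by omega
    rw [this]
    omega
  rw [hsplit, h1, h2, Nat.mul_add, gauss, gauss]

end CycAux

namespace CycAux
variable {n : ℕ}

lemma count_set [NeZero n] (hn : 3 ≤ n) (u v : Fin n) :
    {H : (cycleGraph n).Subgraph | H.Connected ∧ u ∈ H.verts ∧ v ∈ H.verts}.ncard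
      = 1 + ∑ b : Fin n, (n - max (u - b).val (v - b).val) := by
  classical
  set T : Finset (Fin n × ℕ) :=
    (Finset.univ ×ˢ Finset.Icc 1 n).filter
      (fun p => (u - p.1).val < p.2 ∧ (v - p.1).val < p.2) with hT
  have hTmem : ∀ p : Fin n × ℕ, p ∈ T ↔
      1 ≤ p.2 ∧ p.2 ≤ n ∧ (u - p.1).val < p.2 ∧ (v - p.1).val < p.2 := by
    intro p
    rw [hT, Finset.mem_filter, Finset.mem_product, Finset.mem_Icc]
    simp only [Finset.mem_univ, true_and]
    tauto
  have hSet : {H : (cycleGraph n).Subgraph | H.Connected ∧ u ∈ H.verts ∧ v ∈ H.verts}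
      = insert ⊤ ((fun p : Fin n × ℕ => arcSub p.1 p.2) '' ↑T) := by
    ext H
    simp only [Set.mem_setOf_eq, Set.mem_insert_iff, Set.mem_image, Finset.mem_coe]
    constructor
    · rintro ⟨hc, hu, hv⟩
      rcases conn_classify hn H hc with rfl | ⟨b, k, hk1, hk2, rfl⟩
      · left; rfl
      · right
        refine ⟨(b, k), ?_, rfl⟩
        rw [hTmem]
        exact ⟨hk1, hk2, hu, hv⟩
    · rintro (rfl | ⟨⟨b, k⟩, hmem, rfl⟩)
      · exact ⟨top_connected hn, Set.mem_univ u, Set.mem_univ v⟩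
      · rw [hTmem] at hmem
        exact ⟨arcSub_connected hn b hmem.1, hmem.2.2.1, hmem.2.2.2⟩
  have hnotmem : (⊤ : (cycleGraph n).Subgraph) ∉
      ((fun p : Fin n × ℕ => arcSub p.1 p.2) '' ↑T) := by
    rintro ⟨⟨b, k⟩, hmem, heq⟩
    rw [Finset.mem_coe, hTmem] at hmem
    exact arcSub_ne_top hn b hmem.2.1 heq
  have hinj : Set.InjOn (fun p : Fin n × ℕ => arcSub p.1 p.2) ↑T := by
    rintro ⟨b, k⟩ hp ⟨b', k'⟩ hq h
    rw [Finset.mem_coe, hTmem] at hp hq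
    obtain ⟨h1, h2⟩ := arcSub_inj hn hp.1 hp.2.1 hq.1 hq.2.1 h
    exact Prod.ext h1 h2
  rw [hSet, Set.ncard_insert_of_notMem hnotmem ((T.finite_toSet).image _),
    Set.ncard_image_of_injOn hinj, Set.ncard_coe_finset]
  have hfib := Finset.card_eq_sum_card_fiberwise
    (f := Prod.fst) (s := T) (t := Finset.univ) (fun p _ => Finset.mem_univ _)
  rw [hfib]
  have hfiber : ∀ b : Fin n, (T.filter (fun p => p.1 = b)).card
      = n - max (u - b).val (v - b).val := by
    intro b
    set M := max (u - b).val (v - b).val with hM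
    have hMn : M < n := by
      rw [hM]
      have := (u - b).isLt
      have := (v - b).isLt
      omega
    have himg : T.filter (fun p => p.1 = b)
        = (Finset.Icc (M + 1) n).image (fun k => (b, k)) := by
      ext ⟨b', k⟩
      rw [Finset.mem_filter, hTmem, Finset.mem_image]
      constructor
      · rintro ⟨⟨h1, h2, h3, h4⟩, h5⟩
        obtain rfl : b' = b := h5
        have h3' : (u - b').val < k := h3
        have h4' : (v - b').val < k := h4
        refine ⟨k, ?_, rfl⟩
        rw [Finset.mem_Icc]
        omega
      · rintro ⟨k', hk', heq⟩
        rw [Finset.mem_Icc] at hk'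
        obtain ⟨rfl, rfl⟩ := Prod.mk.injEq _ _ _ _ ▸ heq
        refine ⟨⟨by omega, by omega, ?_, ?_⟩, rfl⟩
        · show (u - b).val < k'
          omega
        · show (v - b).val < k'
          omega
    rw [himg, Finset.card_image_of_injective _ (fun a b h => (Prod.mk.injEq _ _ _ _ ▸ h).2),
      Nat.card_Icc]
    omega
  rw [Finset.sum_congr rfl (fun b _ => hfiber b)]
  omega

end CycAux


set_option maxHeartbeats 1000000 in
theorem numCSvw_cycleGraph (n d : ℕ) (hn : 3 ≤ n) (u v : Fin n)
    (hd : (cycleGraph n).dist u v = d) (hd1 : 1 ≤ d) (hd2 : 2 * d ≤ n) :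
    2 * numCSvw (cycleGraph n) u v + 2 * n * d = n ^ 2 + 2 * d ^ 2 + n + 2 ∧
    n ^ 2 + 2 * n + 4 ≤ 4 * numCSvw (cycleGraph n) u v ∧
    2 * numCSvw (cycleGraph n) u v + n ≤ n ^ 2 + 4 ∧
    (4 * numCSvw (cycleGraph n) u v = n ^ 2 + 2 * n + 4 ↔ 2 * d = n) ∧
    (2 * numCSvw (cycleGraph n) u v + n = n ^ 2 + 4 ↔ d = 1) := by
  haveI : NeZero n := ⟨by omega⟩
  have huv : u ≠ v := by
    intro h
    rw [h, SimpleGraph.dist_self] at hd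
    omega
  have hdist := CycAux.cycle_dist hn u v huv
  set e := (v - u).val with he
  have hen := (v - u).isLt
  have hecase : e = d ∨ e = n - d := by rw [hd] at hdist; omega
  have hcount : numCSvw (cycleGraph n) u v
      = 1 + ∑ b : Fin n, (n - max (u - b).val (v - b).val) := CycAux.count_set hn u v
  have hre : ∑ b : Fin n, (n - max (u - b).val (v - b).val)
      = ∑ x : Fin n, (n - max x.val ((v - u) + x).val) := by
    refine (Fintype.sum_equiv (Equiv.subLeft u)
      (fun x => n - max x.val ((v - u) + x).val)
      (fun b => n - max (u - b).val (v - b).val) ?_).symm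
    intro x
    have h1 : u - (u - x) = x := by ring
    have h2 : v - (u - x) = (v - u) + x := by ring
    simp only [Equiv.subLeft_apply, h1, h2]
  have hrange : ∑ x : Fin n, (n - max x.val ((v - u) + x).val)
      = ∑ j ∈ Finset.range n, (n - max j ((e + j) % n)) := by
    simp only [Fin.val_add]
    exact Fin.sum_univ_eq_sum_range (fun j => n - max j ((e + j) % n)) n
  have hsum := CycAux.sum_max hn e hen
  have hsum_d : 2 * (∑ j ∈ Finset.range n, (n - max j ((e + j) % n)))
      = (n - d) * (n - d + 1) + d * (d + 1) := by
    rcases hecase with heq | heq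
    · rw [heq] at hsum ⊢; exact hsum
    · rw [heq] at hsum ⊢
      rw [(by omega : n - (n - d) = d)] at hsum
      linarith [hsum]
  have hEeq : numCSvw (cycleGraph n) u v
      = 1 + ∑ j ∈ Finset.range n, (n - max j ((e + j) % n)) := by
    rw [hcount, hre, hrange]
  have h2E : 2 * numCSvw (cycleGraph n) u v
      = 2 + ((n - d) * (n - d + 1) + d * (d + 1)) := by
    rw [hEeq]
    linarith [hsum_d]
  clear hEeq hsum_d hsum hrange hre hcount hdist hecase hd
  obtain ⟨s, hs⟩ : ∃ s, d = s + 1 := ⟨d - 1, by omega⟩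
  subst hs
  obtain ⟨t, ht⟩ : ∃ t, n = t + 2 * (s + 1) := ⟨n - 2 * (s + 1), by omega⟩
  subst ht
  rw [(by omega : t + 2 * (s + 1) - (s + 1) = t + s + 1)] at h2E
  refine ⟨by linarith [h2E], by linarith [h2E, Nat.zero_le (t * t)],
    by linarith [h2E, Nat.zero_le (s * t), Nat.zero_le (s * s)], ?_, ?_⟩
  · constructor
    · intro h
      have hts : t * t = 0 := by linarith [h2E, h]
      have ht0 : t = 0 := mul_self_eq_zero.mp hts
      omega
    · intro h
      have ht0 : t = 0 := by omega
      subst ht0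
      linarith [h2E]
  · constructor
    · intro h
      have hzz : s * t + s * s = 0 := by linarith [h2E, h]
      obtain ⟨h1, h2⟩ := Nat.add_eq_zero.mp hzz
      have : s = 0 := mul_self_eq_zero.mp h2
      omega
    · intro h
      have hs0 : s = 0 := by omega
      subst hs0
      linarith [h2E]
end

section
/- A minimally 2-connected graph with more than 3 vertices contains no triangle. -/
open SimpleGraph

/-- `G` is minimally 2-connected. -/
def MinimallyTwoConnected {V : Type*} (G : SimpleGraph V) : Prop :=
  TwoConnected G ∧ ∀ e ∈ G.edgeSet, ¬ TwoConnected (G.deleteEdges {e})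


section Aux
variable {V : Type*} {G : SimpleGraph V}

/-- Reachability within the vertex set `s`, avoiding edges in `D`. -/
def AuxReach (G : SimpleGraph V) (D : Set (Sym2 V)) (s : Set V) (x y : V) : Prop :=
  ∃ p : G.Walk x y, (∀ z ∈ p.support, z ∈ s) ∧ ∀ e ∈ p.edges, e ∉ D

namespace AuxReach
variable {D : Set (Sym2 V)} {s : Set V} {x y z : V}

lemma refl (hx : x ∈ s) : AuxReach G D s x x :=
  ⟨.nil, by simpa using hx, by simp⟩

lemma symm (h : AuxReach G D s x y) : AuxReach G D s y x := by
  obtain ⟨p, hs, hD⟩ := h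
  exact ⟨p.reverse, fun z hz => hs z (by simpa [SimpleGraph.Walk.support_reverse] using hz),
    fun e he => hD e (by simpa [SimpleGraph.Walk.edges_reverse] using he)⟩

lemma trans (h : AuxReach G D s x y) (h' : AuxReach G D s y z) : AuxReach G D s x z := by
  obtain ⟨p, hs, hD⟩ := h; obtain ⟨q, hs', hD'⟩ := h'
  refine ⟨p.append q, fun u hu => ?_, fun e he => ?_⟩
  · rcases (SimpleGraph.Walk.mem_support_append_iff p q).mp hu with h | h
    exacts [hs _ h, hs' _ h]
  · rcases by simpa [SimpleGraph.Walk.edges_append] using he with h | h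
    exacts [hD _ h, hD' _ h]

lemma of_adj (h : G.Adj x y) (hx : x ∈ s) (hy : y ∈ s) (hD : s(x, y) ∉ D) :
    AuxReach G D s x y :=
  ⟨.cons h .nil, by simp [hx, hy], by simpa using hD⟩

lemma reachable_aux : ∀ {x y : V} (p : G.Walk x y), (∀ z ∈ p.support, z ∈ s) →
    (∀ e ∈ p.edges, e ∉ D) → ∀ (hx : x ∈ s) (hy : y ∈ s),
    ((G.deleteEdges D).induce s).Reachable ⟨x, hx⟩ ⟨y, hy⟩ := by
  intro x y p
  induction p with
  | nil => intro _ _ _ _; exact Reachable.refl _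
  | @cons u v w h q ih =>
    intro hs hD hu hw
    have hv : v ∈ s := hs v (by simp)
    have adj : ((G.deleteEdges D).induce s).Adj ⟨u, hu⟩ ⟨v, hv⟩ := by
      simp only [comap_adj, Function.Embedding.coe_subtype, deleteEdges_adj]
      exact ⟨h, hD _ (by simp)⟩
    exact adj.reachable.trans (ih (fun z hz => hs z (by simp [hz]))
      (fun e he => hD e (by simp [he])) hv hw)

lemma reachable (h : AuxReach G D s x y) (hx : x ∈ s) (hy : y ∈ s) :
    ((G.deleteEdges D).induce s).Reachable ⟨x, hx⟩ ⟨y, hy⟩ := by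
  obtain ⟨p, hs, hD⟩ := h
  exact reachable_aux p hs hD hx hy

lemma of_reachable {u v : ↥s} (h : ((G.deleteEdges D).induce s).Reachable u v) :
    AuxReach G D s u.val v.val := by
  obtain ⟨p⟩ := h
  let q := p.map (SimpleGraph.Embedding.induce s (G := G.deleteEdges D)).toHom
  have hq : ∀ e ∈ q.edges, e ∈ (G.deleteEdges D).edgeSet := fun e he => q.edges_subset_edgeSet he
  refine ⟨q.transfer G (fun e he => ((edgeSet_deleteEdges D ▸ hq e he).1 : e ∈ G.edgeSet)),
    fun t ht => ?_, fun e he => ?_⟩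
  · erw [SimpleGraph.Walk.support_transfer (p := q)] at ht
    rw [show q = p.map _ from rfl, SimpleGraph.Walk.support_map] at ht
    obtain ⟨a, _, rfl⟩ := List.mem_map.mp ht
    exact a.2
  · erw [SimpleGraph.Walk.edges_transfer (p := q)] at he
    exact (edgeSet_deleteEdges D ▸ hq e he).2

end AuxReach

lemma preconnected_transfer {W : Type*} {G H : SimpleGraph W}
    (hadj : ∀ x y, G.Adj x y → H.Reachable x y) (hG : G.Preconnected) : H.Preconnected := by
  intro u v
  obtain ⟨p⟩ := hG u v
  induction p with
  | nil => exact Reachable.refl _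
  | cons h q ih => exact (hadj _ _ h).trans ih

end Aux

section Main
variable {V : Type*} {G : SimpleGraph V} {x y z : V}

lemma sep_of_triangle (hmin : MinimallyTwoConnected G)
    (hxy : G.Adj x y) (hxz : G.Adj x z) (hyz : G.Adj y z) :
    ¬ ((G.deleteEdges {s(x, y)}).induce {u | u ≠ z}).Connected := by
  have hxz' : s(x, z) ≠ s(x, y) := by
    intro h
    rcases Sym2.eq_iff.mp h with ⟨_, h2⟩ | ⟨h1, _⟩
    · exact hyz.ne h2.symm
    · exact hxy.ne h1
  have hzy' : s(z, y) ≠ s(x, y) := by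
    intro h
    rcases Sym2.eq_iff.mp h with ⟨h1, _⟩ | ⟨_, h2⟩
    · exact hxz.ne h1.symm
    · exact hxy.ne h2.symm
  have hG'xz : (G.deleteEdges {s(x, y)}).Adj x z := by
    rw [deleteEdges_adj]; exact ⟨hxz, by simpa using hxz'⟩
  have hG'zy : (G.deleteEdges {s(x, y)}).Adj z y := by
    rw [deleteEdges_adj]; exact ⟨hyz.symm, by simpa using hzy'⟩
  have hG'conn : (G.deleteEdges {s(x, y)}).Connected := by
    haveI : Nonempty V := hmin.1.1.nonempty
    refine ⟨preconnected_transfer ?_ hmin.1.1.preconnected⟩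
    intro u w huw
    by_cases he : s(u, w) = s(x, y)
    · rcases Sym2.eq_iff.mp he with ⟨h1, h2⟩ | ⟨h1, h2⟩
      · subst h1; subst h2; exact hG'xz.reachable.trans hG'zy.reachable
      · subst h1; subst h2; exact (hG'xz.reachable.trans hG'zy.reachable).symm
    · exact Adj.reachable (by rw [deleteEdges_adj]; exact ⟨huw, by simpa using he⟩)
  have hnot : ¬ TwoConnected (G.deleteEdges {s(x, y)}) := hmin.2 _ hxy
  have hcut : ∃ v, IsCutVertex (G.deleteEdges {s(x, y)}) v := by
    by_contra hc; push_neg at hc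
    exact hnot ⟨hG'conn, hmin.1.2.1, hc⟩
  obtain ⟨v, hv⟩ := hcut
  by_cases hvz : v = z
  · subst hvz; exact hv
  · exfalso
    apply hv
    have hGv : (G.induce {u | u ≠ v}).Connected := not_not.mp (hmin.1.2.2 v)
    have hzv : z ∈ {u | u ≠ v} := fun h => hvz h.symm
    haveI : Nonempty {u // u ∈ {u | u ≠ v}} := ⟨⟨z, hzv⟩⟩
    refine ⟨preconnected_transfer ?_ hGv.preconnected⟩
    intro p q hpq
    have hpq' : G.Adj p.val q.val := hpq
    by_cases he : s(p.val, q.val) = s(x, y)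
    · have hpath : ∀ (a b : {u // u ≠ v}), a.val = x → b.val = y →
        ((G.deleteEdges {s(x, y)}).induce {u | u ≠ v}).Reachable a b := by
        intro a b ha hb
        have adj1 : ((G.deleteEdges {s(x, y)}).induce {u | u ≠ v}).Adj a ⟨z, hzv⟩ := by
          simp only [comap_adj, Function.Embedding.coe_subtype]
          rw [ha]; exact hG'xz
        have adj2 : ((G.deleteEdges {s(x, y)}).induce {u | u ≠ v}).Adj ⟨z, hzv⟩ b := by
          simp only [comap_adj, Function.Embedding.coe_subtype]
          rw [hb]; exact hG'zy
        exact adj1.reachable.trans adj2.reachable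
      rcases Sym2.eq_iff.mp he with ⟨h1, h2⟩ | ⟨h1, h2⟩
      · exact hpath p q h1 h2
      · exact (hpath q p h2 h1).symm
    · exact Adj.reachable (by
        simp only [comap_adj, Function.Embedding.coe_subtype, deleteEdges_adj]
        exact ⟨hpq', by simpa using he⟩)

lemma step2 (hmin : MinimallyTwoConnected G)
    (hxy : G.Adj x y) (hxz : G.Adj x z) (hyz : G.Adj y z) :
    ¬ AuxReach G {s(x, y)} {u | u ≠ z} x y ∧
      ∀ u, u ≠ z → AuxReach G {s(x, y)} {u | u ≠ z} u x ∨
        AuxReach G {s(x, y)} {u | u ≠ z} u y := by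
  have sep := sep_of_triangle hmin hxy hxz hyz
  have hGz : (G.induce {u | u ≠ z}).Connected := not_not.mp (hmin.1.2.2 z)
  have hxs : x ∈ {u | u ≠ z} := hxz.ne
  have hys : y ∈ {u | u ≠ z} := hyz.ne
  constructor
  · intro hR
    apply sep
    haveI : Nonempty {u // u ∈ {u | u ≠ z}} := ⟨⟨x, hxs⟩⟩
    refine ⟨preconnected_transfer ?_ hGz.preconnected⟩
    intro p q hpq
    have hpq' : G.Adj p.val q.val := hpq
    by_cases he : s(p.val, q.val) = s(x, y)
    · rcases Sym2.eq_iff.mp he with ⟨h1, h2⟩ | ⟨h1, h2⟩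
      · have hp : p = ⟨x, hxs⟩ := Subtype.ext h1
        have hq : q = ⟨y, hys⟩ := Subtype.ext h2
        rw [hp, hq]; exact hR.reachable hxs hys
      · have hp : p = ⟨y, hys⟩ := Subtype.ext h1
        have hq : q = ⟨x, hxs⟩ := Subtype.ext h2
        rw [hp, hq]; exact (hR.reachable hxs hys).symm
    · exact Adj.reachable (by
        simp only [comap_adj, Function.Embedding.coe_subtype, deleteEdges_adj]
        exact ⟨hpq', by simpa using he⟩)
  · intro u hu
    obtain ⟨p⟩ := hGz.preconnected ⟨x, hxs⟩ ⟨u, hu⟩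
    have main : ∀ {a b : {u // u ∈ {u | u ≠ z}}} (_ : (G.induce {u | u ≠ z}).Walk a b),
        (AuxReach G {s(x, y)} {u | u ≠ z} a.val x ∨ AuxReach G {s(x, y)} {u | u ≠ z} a.val y) →
        (AuxReach G {s(x, y)} {u | u ≠ z} b.val x ∨
          AuxReach G {s(x, y)} {u | u ≠ z} b.val y) := by
      intro a b q
      induction q with
      | nil => exact id
      | @cons a r b h q ih =>
        intro ha
        apply ih
        have hadj : G.Adj a.val r.val := h
        by_cases he : s(a.val, r.val) = s(x, y)
        · rcases Sym2.eq_iff.mp he with ⟨h1, h2⟩ | ⟨h1, h2⟩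
          · exact Or.inr (by rw [h2]; exact AuxReach.refl hys)
          · exact Or.inl (by rw [h2]; exact AuxReach.refl hxs)
        · have hr : AuxReach G {s(x, y)} {u | u ≠ z} r.val a.val :=
            (AuxReach.of_adj hadj a.2 r.2 (by simpa using he)).symm
          rcases ha with h' | h'
          exacts [Or.inl (hr.trans h'), Or.inr (hr.trans h')]
    exact main p (Or.inl (AuxReach.refl hxs))

lemma step3
    (hxy : G.Adj x y) (hxz : G.Adj x z) (hyz : G.Adj y z)
    (nr_xy : ¬ AuxReach G {s(x, y)} {u | u ≠ z} x y)
    (r_xy : ∀ u, u ≠ z → AuxReach G {s(x, y)} {u | u ≠ z} u x ∨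
      AuxReach G {s(x, y)} {u | u ≠ z} u y)
    (nr_xz : ¬ AuxReach G {s(x, z)} {u | u ≠ y} x z)
    (nr_yz : ¬ AuxReach G {s(y, z)} {u | u ≠ x} y z) :
    ∀ w, G.Adj z w → w = x ∨ w = y := by
  classical
  intro w hzw
  by_contra hcon
  push_neg at hcon
  obtain ⟨hwx, hwy⟩ := hcon
  have hwz : w ≠ z := hzw.ne'
  rcases r_xy w hwz with ⟨p, hs, hD⟩ | ⟨p, hs, hD⟩
  · by_cases hy' : y ∈ p.support
    · exact nr_xy (AuxReach.symm ⟨p.dropUntil y hy',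
        fun t ht => hs t (p.support_dropUntil_subset hy' ht),
        fun e he => hD e (p.edges_dropUntil_subset hy' he)⟩)
    · have h1 : AuxReach G {s(x, z)} {u | u ≠ y} w x := by
        refine ⟨p, fun t ht hty => hy' (hty ▸ ht), fun e he hmem => ?_⟩
        rw [Set.mem_singleton_iff] at hmem
        subst hmem
        exact (hs z (p.snd_mem_support_of_mem_edges he)) rfl
      have h2 : AuxReach G {s(x, z)} {u | u ≠ y} z w := by
        refine AuxReach.of_adj hzw (show z ≠ y from hyz.ne') hwy ?_
        rw [Set.mem_singleton_iff]
        intro h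
        rcases Sym2.eq_iff.mp h with ⟨h1', _⟩ | ⟨_, h2'⟩
        · exact hxz.ne h1'.symm
        · exact hwx h2'
      exact nr_xz ((h2.trans h1).symm)
  · by_cases hx' : x ∈ p.support
    · exact nr_xy ⟨p.dropUntil x hx',
        fun t ht => hs t (p.support_dropUntil_subset hx' ht),
        fun e he => hD e (p.edges_dropUntil_subset hx' he)⟩
    · have h1 : AuxReach G {s(y, z)} {u | u ≠ x} w y := by
        refine ⟨p, fun t ht htx => hx' (htx ▸ ht), fun e he hmem => ?_⟩
        rw [Set.mem_singleton_iff] at hmem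
        subst hmem
        exact (hs z (p.snd_mem_support_of_mem_edges he)) rfl
      have h2 : AuxReach G {s(y, z)} {u | u ≠ x} z w := by
        refine AuxReach.of_adj hzw (show z ≠ x from hxz.ne') hwx ?_
        rw [Set.mem_singleton_iff]
        intro h
        rcases Sym2.eq_iff.mp h with ⟨h1', _⟩ | ⟨_, h2'⟩
        · exact hyz.ne h1'.symm
        · exact hwy h2'
      exact nr_yz ((h2.trans h1).symm)

end Main

theorem minimallyTwoConnected_triangle_free {V : Type*} (G : SimpleGraph V)
    (hmin : MinimallyTwoConnected G) (hcard : 3 < Nat.card V) :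
    ∀ a b c : V, ¬ (G.Adj a b ∧ G.Adj b c ∧ G.Adj a c) := by
  rintro a b c ⟨hab, hbc, hac⟩
  obtain ⟨nr_ab, r_ab⟩ := step2 hmin hab hac hbc
  obtain ⟨nr_bc, r_bc⟩ := step2 hmin hbc hab.symm hac.symm
  obtain ⟨nr_ac, r_ac⟩ := step2 hmin hac hab hbc.symm
  have nr_ba : ¬ AuxReach G {s(b, a)} {u | u ≠ c} b a := by
    have e : s(b, a) = s(a, b) := Sym2.eq_swap
    rw [e]; exact fun h => nr_ab h.symm
  have nr_ca : ¬ AuxReach G {s(c, a)} {u | u ≠ b} c a := by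
    have e : s(c, a) = s(a, c) := Sym2.eq_swap
    rw [e]; exact fun h => nr_ac h.symm
  have nr_cb : ¬ AuxReach G {s(c, b)} {u | u ≠ a} c b := by
    have e : s(c, b) = s(b, c) := Sym2.eq_swap
    rw [e]; exact fun h => nr_bc h.symm
  have hNc : ∀ w, G.Adj c w → w = a ∨ w = b := step3 hab hac hbc nr_ab r_ab nr_ac nr_bc
  have hNa : ∀ w, G.Adj a w → w = b ∨ w = c :=
    step3 hbc hab.symm hac.symm nr_bc r_bc nr_ba nr_ca
  have hNb : ∀ w, G.Adj b w → w = a ∨ w = c := step3 hac hab hbc.symm nr_ac r_ac nr_ab nr_cb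
  have hfin : Finite V := (Nat.card_pos_iff.mp (by omega)).2
  have hd : ∃ d : V, d ≠ a ∧ d ≠ b ∧ d ≠ c := by
    by_contra h
    push_neg at h
    have hsub : (Set.univ : Set V) ⊆ {a, b, c} := by
      intro d _
      simp only [Set.mem_insert_iff, Set.mem_singleton_iff]
      by_cases h1 : d = a
      · exact Or.inl h1
      · by_cases h2 : d = b
        · exact Or.inr (Or.inl h2)
        · exact Or.inr (Or.inr (h d h1 h2))
    have h1 := Set.ncard_le_ncard hsub (Set.toFinite _)
    rw [Set.ncard_univ] at h1
    have h2 : ({a, b, c} : Set V).ncard ≤ 3 := by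
      refine le_trans (Set.ncard_insert_le _ _) ?_
      have h3 := Set.ncard_insert_le b ({c} : Set V)
      simp only [Set.ncard_singleton] at h3 ⊢
      omega
    omega
  obtain ⟨d, hda, hdb, hdc⟩ := hd
  obtain ⟨p⟩ := hmin.1.1.preconnected a d
  have key : ∀ {u v : V} (_ : G.Walk u v),
      (u = a ∨ u = b ∨ u = c) → (v = a ∨ v = b ∨ v = c) := by
    intro u v p
    induction p with
    | nil => exact id
    | @cons u r v h q ih =>
      intro hu
      apply ih
      rcases hu with rfl | rfl | rfl
      · rcases hNa r h with rfl | rfl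
        · exact Or.inr (Or.inl rfl)
        · exact Or.inr (Or.inr rfl)
      · rcases hNb r h with rfl | rfl
        · exact Or.inl rfl
        · exact Or.inr (Or.inr rfl)
      · rcases hNc r h with rfl | rfl
        · exact Or.inl rfl
        · exact Or.inr (Or.inl rfl)
  rcases key p (Or.inl rfl) with rfl | rfl | rfl
  · exact hda rfl
  · exact hdb rfl
  · exact hdc rfl
end
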